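/- Let n ≥ 1, d > 0, a ∈ ℝⁿ a constant vector, L₁,…,Lₙ > 0, and Ω = (0,L₁) × ⋯ × (0,Lₙ). Assume f satisfies (F), g satisfies (G-ext), and ∑_{i=1}^n 1/Lᵢ² > (1/(dπ²))·[f'(0) + ln(g'(0)) − |a|²/(4d)]. Then every solution of the impulsive reaction–diffusion system on Ω satisfies lim_{m→∞} N_m(x) = 0 for every x ∈ Ω. -/

import Mathlib

open Real Filter MeasureTheory
open scoped Topology ENNReal

noncomputable section

/-- First-order partial derivative of `u` in the `i`-th coordinate direction. -/
def pd {n : ℕ} (u : EuclideanSpace ℝ (Fin n) → ℝ) (i : Fin n)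
    (x : EuclideanSpace ℝ (Fin n)) : ℝ :=
  fderiv ℝ u x (EuclideanSpace.single i 1)

/-- Second-order partial derivative `∂ᵢ∂ⱼ u`. -/
def pd2 {n : ℕ} (u : EuclideanSpace ℝ (Fin n) → ℝ) (i j : Fin n)
    (x : EuclideanSpace ℝ (Fin n)) : ℝ :=
  pd (fun y => pd u j y) i x

/-- Laplacian of `u`. -/
def lap {n : ℕ} (u : EuclideanSpace ℝ (Fin n) → ℝ) (x : EuclideanSpace ℝ (Fin n)) : ℝ :=
  ∑ i, pd2 u i i x

/-- Assumption (F): `f` is locally Lipschitz, `f 0 = 0`, `f` is differentiable at `0`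
with derivative `f'0 ≠ 0`, and there is a differentiable `h` with `h 0 = h' 0 = 0` such that
`f'0 * N - h N ≤ f N ≤ f'0 * N` for all `N ≥ 0`. -/
def SatF (f : ℝ → ℝ) (f'0 : ℝ) : Prop :=
  LocallyLipschitz f ∧ f 0 = 0 ∧ HasDerivAt f f'0 0 ∧ f'0 ≠ 0 ∧
    ∃ h : ℝ → ℝ, Differentiable ℝ h ∧ h 0 = 0 ∧ deriv h 0 = 0 ∧
      ∀ N : ℝ, 0 ≤ N → f'0 * N - h N ≤ f N ∧ f N ≤ f'0 * N

/-- Assumption (G-ext): `g : [0,∞) → [0,∞)` is continuous, `g 0 = 0`, `g N > 0` for `N > 0`,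
`g` is differentiable at `0` (within `[0,∞)`) with derivative `g'0 > 0`, and
`g N ≤ g'0 * N` for all `N > 0`. -/
def SatGext (g : ℝ → ℝ) (g'0 : ℝ) : Prop :=
  ContinuousOn g (Set.Ici 0) ∧ g 0 = 0 ∧ (∀ N : ℝ, 0 < N → 0 < g N) ∧
    HasDerivWithinAt g g'0 (Set.Ici 0) 0 ∧ 0 < g'0 ∧ ∀ N : ℝ, 0 < N → g N ≤ g'0 * N

/-- A solution of the impulsive reaction-diffusion system
`∂ₜ u⁽ᵐ⁾ = d Δu⁽ᵐ⁾ - a ⬝ ∇u⁽ᵐ⁾ + f (u⁽ᵐ⁾)` on `Ω × (0,1]` with hostile (Dirichlet) boundary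
conditions, initial data `u⁽ᵐ⁾(·,0) = g (N_m ·)` and update rule `N_{m+1} = u⁽ᵐ⁾(·,1)`. -/
structure ImpSol (n : ℕ) (Ω : Set (EuclideanSpace ℝ (Fin n))) (d : ℝ)
    (a : EuclideanSpace ℝ (Fin n) → EuclideanSpace ℝ (Fin n)) (f g : ℝ → ℝ) where
  N : ℕ → EuclideanSpace ℝ (Fin n) → ℝ
  u : ℕ → EuclideanSpace ℝ (Fin n) → ℝ → ℝ
  N_cont : ∀ m, ContinuousOn (N m) (closure Ω)
  N_nonneg : ∀ m, ∀ x ∈ closure Ω, 0 ≤ N m x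
  N0_bdry : ∀ x ∈ frontier Ω, N 0 x = 0
  u_nonneg : ∀ m, ∀ x ∈ closure Ω, ∀ t ∈ Set.Icc (0:ℝ) 1, 0 ≤ u m x t
  u_cont : ∀ m, ContinuousOn (fun p : EuclideanSpace ℝ (Fin n) × ℝ => u m p.1 p.2)
    (closure Ω ×ˢ Set.Icc (0:ℝ) 1)
  u_space_C2 : ∀ m, ∀ t ∈ Set.Ioc (0:ℝ) 1, ∀ x ∈ Ω, ContDiffAt ℝ 2 (fun y => u m y t) x
  u_time_C1 : ∀ m, ∀ x ∈ Ω, ∀ t ∈ Set.Ioc (0:ℝ) 1, ContDiffAt ℝ 1 (fun s => u m x s) t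
  pde : ∀ m, ∀ x ∈ Ω, ∀ t ∈ Set.Ioc (0:ℝ) 1,
    deriv (fun s => u m x s) t =
      d * lap (fun y => u m y t) x - (∑ i, a x i * pd (fun y => u m y t) i x) + f (u m x t)
  bdry : ∀ m, ∀ x ∈ frontier Ω, ∀ t ∈ Set.Ioc (0:ℝ) 1, u m x t = 0
  init : ∀ m, ∀ x ∈ Ω, u m x 0 = g (N m x)
  recur : ∀ m, ∀ x ∈ closure Ω, N (m + 1) x = u m x 1

/-!
On the slightly enlarged box `∏ (-ε/2, Lᵢ + ε/2)` the principal Dirichlet eigenfunction of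
`d Δ - a ⬝ ∇`, namely `Φ x = ∏ exp (aᵢ xᵢ / (2d)) sin (π (xᵢ + ε/2) / (Lᵢ + ε))`, is positive on
the closed box `cl Ω` and has eigenvalue `ν = -(|a|²/(4d) + d π² ∑ 1/(Lᵢ + ε)²)`.
Because `f N ≤ f'(0) N`, the parabolic maximum principle bounds each `u⁽ᵐ⁾(·, t)` by
`exp ((f'(0) + ν) t) Φ` times the bound on its initial datum, and `g N ≤ g'(0) N` then gives
`N_m ≤ C ρ^m Φ` with `ρ = g'(0) exp (f'(0) + ν)`. The hypothesis on `∑ 1/Lᵢ²` says exactly that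
`ρ < 1` once `ε` is small enough.
-/

variable {n : ℕ}

local notation "E" => EuclideanSpace ℝ (Fin n)

section PartialDerivatives

variable {F G : EuclideanSpace ℝ (Fin n) → ℝ} {x : EuclideanSpace ℝ (Fin n)}

lemma pd_eq_of_hasFDerivAt {F' : E →L[ℝ] ℝ} (h : HasFDerivAt F F' x) (i : Fin n) :
    pd F i x = F' (EuclideanSpace.single i 1) := by
  rw [pd, h.fderiv]

lemma pd_sub (hF : DifferentiableAt ℝ F x) (hG : DifferentiableAt ℝ G x) (i : Fin n) :
    pd (F - G) i x = pd F i x - pd G i x :=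
  pd_eq_of_hasFDerivAt (hF.hasFDerivAt.sub hG.hasFDerivAt) i

lemma pd_const_smul (c : ℝ) (F : E → ℝ) (i : Fin n) (x : E) :
    pd (c • F) i x = c * pd F i x := by
  rw [pd, fderiv_const_smul_field]; rfl

lemma pd2_const_smul (c : ℝ) (F : E → ℝ) (i j : Fin n) (x : E) :
    pd2 (c • F) i j x = c * pd2 F i j x := by
  have h : (fun y => pd (c • F) j y) = c • fun y => pd F j y :=
    funext fun y => pd_const_smul c F j y
  rw [pd2, h, pd_const_smul]; rfl

lemma lap_const_smul (c : ℝ) (F : E → ℝ) (x : E) : lap (c • F) x = c * lap F x := by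
  simp only [lap, pd2_const_smul, Finset.mul_sum]

lemma differentiableAt_pd (hF : ContDiffAt ℝ 2 F x) (i : Fin n) :
    DifferentiableAt ℝ (fun y => pd F i y) x :=
  (ContinuousLinearMap.apply ℝ ℝ (EuclideanSpace.single i 1)).differentiableAt.comp
    (f := fderiv ℝ F) x ((hF.fderiv_right le_rfl).differentiableAt one_ne_zero)

lemma pd2_sub (hF : ContDiffAt ℝ 2 F x) (hG : ContDiffAt ℝ 2 G x) (i j : Fin n) :
    pd2 (F - G) i j x = pd2 F i j x - pd2 G i j x := by
  have hev : (fun y => pd (F - G) j y) =ᶠ[𝓝 x] (fun y => pd F j y) - fun y => pd G j y := by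
    filter_upwards [hF.eventually (by simp), hG.eventually (by simp)] with y hFy hGy
    exact pd_sub (hFy.differentiableAt two_ne_zero) (hGy.differentiableAt two_ne_zero) j
  rw [pd2, pd, hev.fderiv_eq]
  exact pd_sub (differentiableAt_pd hF j) (differentiableAt_pd hG j) i

lemma deriv_deriv_nonpos_of_isLocalMax {q : ℝ → ℝ} {s : ℝ} (hmax : IsLocalMax q s)
    (hq : ContinuousAt q s) : deriv (deriv q) s ≤ 0 := by
  by_contra! hpos
  -- a local maximum that the second derivative test also makes a local minimum is flat
  have hmin := isLocalMin_of_deriv_deriv_pos hpos hmax.deriv_eq_zero hq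
  have hflat : q =ᶠ[𝓝 s] fun _ => q s := (hmax.and hmin).mono fun _ h => le_antisymm h.1 h.2
  rw [hflat.deriv.deriv_eq] at hpos
  simp at hpos

lemma pd2_nonpos_of_isLocalMax (hF : ContDiffAt ℝ 2 F x) (hmax : IsLocalMax F x) (i : Fin n) :
    pd2 F i i x ≤ 0 := by
  set e : E := EuclideanSpace.single i 1
  have hline (s : ℝ) : HasDerivAt (fun s : ℝ => x + s • e) e s := by
    simpa using ((hasDerivAt_id s).smul_const e).const_add x
  have hline0 : Tendsto (fun s : ℝ => x + s • e) (𝓝 0) (𝓝 x) := by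
    simpa using (hline 0).continuousAt.tendsto
  have hderiv : deriv (fun s : ℝ => F (x + s • e)) =ᶠ[𝓝 0] fun s => pd F i (x + s • e) := by
    filter_upwards [hline0.eventually (hF.eventually (by simp))] with s hs
    exact ((hs.differentiableAt two_ne_zero).hasFDerivAt.comp_hasDerivAt s (hline s)).deriv
  have hpd : HasDerivAt (fun s : ℝ => pd F i (x + s • e)) (pd2 F i i x) 0 :=
    (differentiableAt_pd hF i).hasFDerivAt.comp_hasDerivAt_of_eq (x := 0) (hline 0) (by simp)
  have hmax' : IsLocalMax (fun s : ℝ => F (x + s • e)) 0 :=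
    IsLocalMax.comp_continuous (by simpa using hmax) (hline 0).continuousAt
  rw [← hpd.deriv, ← hderiv.deriv_eq]
  exact deriv_deriv_nonpos_of_isLocalMax hmax'
    (hF.continuousAt.comp_of_eq (hline 0).continuousAt (by simp))

lemma pd_eq_of_isLocalMax_sub (hF : DifferentiableAt ℝ F x) (hG : DifferentiableAt ℝ G x)
    (hmax : IsLocalMax (F - G) x) (i : Fin n) : pd F i x = pd G i x := by
  have h : pd (F - G) i x = 0 := by rw [pd, hmax.fderiv_eq_zero]; rfl
  linarith [pd_sub hF hG i]

lemma pd2_le_of_isLocalMax_sub (hF : ContDiffAt ℝ 2 F x) (hG : ContDiffAt ℝ 2 G x)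
    (hmax : IsLocalMax (F - G) x) (i : Fin n) : pd2 F i i x ≤ pd2 G i i x := by
  linarith [pd2_sub hF hG i i, pd2_nonpos_of_isLocalMax (F := F - G) (hF.sub hG) hmax i]

end PartialDerivatives

def driftLap (d : ℝ) (a : E) (F : E → ℝ) (x : E) : ℝ :=
  d * lap F x - ∑ i, a i * pd F i x

section DriftLaplacian

variable {d : ℝ} {a : EuclideanSpace ℝ (Fin n)} {F G : EuclideanSpace ℝ (Fin n) → ℝ}
  {x : EuclideanSpace ℝ (Fin n)}

lemma driftLap_const_smul (c : ℝ) : driftLap d a (c • F) x = c * driftLap d a F x := by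
  simp only [driftLap, lap_const_smul, pd_const_smul, mul_sub, Finset.mul_sum, mul_left_comm]

lemma driftLap_le_of_isLocalMax_sub (hd : 0 ≤ d) (hF : ContDiffAt ℝ 2 F x)
    (hG : ContDiffAt ℝ 2 G x) (hmax : IsLocalMax (F - G) x) :
    driftLap d a F x ≤ driftLap d a G x := by
  have hpd (i : Fin n) : pd F i x = pd G i x :=
    pd_eq_of_isLocalMax_sub (hF.differentiableAt two_ne_zero) (hG.differentiableAt two_ne_zero)
      hmax i
  have hlap : lap F x ≤ lap G x :=
    Finset.sum_le_sum fun i _ => pd2_le_of_isLocalMax_sub hF hG hmax i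
  simp only [driftLap, hpd]
  gcongr

end DriftLaplacian

section Products

variable (φ : Fin n → ℝ → ℝ)

lemma pd_prod_apply (hφ : ∀ j, Differentiable ℝ (φ j)) (k : Fin n) (x : E) :
    pd (fun y => ∏ j, φ j (y j)) k x
      = deriv (φ k) (x k) * ∏ j ∈ Finset.univ.erase k, φ j (x j) := by
  classical
  have h : HasFDerivAt (fun y : E => ∏ j, φ j (y j))
      (∑ j, (∏ l ∈ Finset.univ.erase j, φ l (x l)) •
        (deriv (φ j) (x j) • (EuclideanSpace.proj j : E →L[ℝ] ℝ))) x :=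
    HasFDerivAt.finsetProd fun j _ =>
      ((hφ j) (x j)).hasDerivAt.comp_hasFDerivAt x (EuclideanSpace.proj (𝕜 := ℝ) j).hasFDerivAt
  rw [pd_eq_of_hasFDerivAt h k, _root_.sum_apply,
    Finset.sum_eq_single_of_mem k (Finset.mem_univ k)]
  · simp [mul_comm]
  · intro j _ hjk
    simp [Ne.symm hjk]

lemma pd2_prod_apply (hφ : ∀ j, Differentiable ℝ (φ j))
    (hφ' : ∀ j, Differentiable ℝ (deriv (φ j))) (k : Fin n) (x : E) :
    pd2 (fun y => ∏ j, φ j (y j)) k k x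
      = deriv (deriv (φ k)) (x k) * ∏ j ∈ Finset.univ.erase k, φ j (x j) := by
  classical
  -- the first derivative is again a product, with `φ k` replaced by `deriv (φ k)`
  set ψ := Function.update φ k (deriv (φ k))
  have hψ (j : Fin n) : Differentiable ℝ (ψ j) := by
    rcases eq_or_ne j k with rfl | hjk
    · simpa [ψ] using hφ' j
    · simpa [ψ, hjk] using hφ j
  have hpd : (fun y => pd (fun z => ∏ j, φ j (z j)) k y) = fun y => ∏ j, ψ j (y j) := by
    funext y
    rw [pd_prod_apply φ hφ k y, ← Finset.mul_prod_erase _ _ (Finset.mem_univ k)]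
    refine congrArg₂ _ (by simp [ψ]) (Finset.prod_congr rfl fun j hj => ?_)
    simp [ψ, Finset.ne_of_mem_erase hj]
  rw [pd2, hpd, pd_prod_apply ψ hψ k x]
  refine congrArg₂ _ (by simp [ψ]) (Finset.prod_congr rfl fun j hj => ?_)
  simp [ψ, Finset.ne_of_mem_erase hj]

lemma contDiff_prod_apply {k : WithTop ℕ∞} (hφ : ∀ j, ContDiff ℝ k (φ j)) :
    ContDiff ℝ k (fun y : E => ∏ j, φ j (y j)) :=
  contDiff_prod fun j _ => (hφ j).comp (EuclideanSpace.proj (𝕜 := ℝ) j).contDiff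

end Products

def expMulSin (β γ θ s : ℝ) : ℝ := exp (β * s) * sin (γ * s + θ)

section ExpMulSin

variable (β γ θ : ℝ)

lemma hasDerivAt_expMulSin (s : ℝ) :
    HasDerivAt (expMulSin β γ θ)
      (exp (β * s) * (β * sin (γ * s + θ) + γ * cos (γ * s + θ))) s := by
  refine ((hasDerivAt_const_mul β).exp.mul
    ((hasDerivAt_const_mul γ).add_const θ).sin).congr_deriv ?_
  ring

lemma deriv_expMulSin :
    deriv (expMulSin β γ θ)
      = fun s => exp (β * s) * (β * sin (γ * s + θ) + γ * cos (γ * s + θ)) :=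
  funext fun s => (hasDerivAt_expMulSin β γ θ s).deriv

lemma hasDerivAt_deriv_expMulSin (s : ℝ) :
    HasDerivAt (deriv (expMulSin β γ θ))
      (exp (β * s) * ((β ^ 2 - γ ^ 2) * sin (γ * s + θ) + 2 * β * γ * cos (γ * s + θ))) s := by
  have hlin : HasDerivAt (fun s => γ * s + θ) γ s := (hasDerivAt_const_mul γ).add_const θ
  rw [deriv_expMulSin]
  refine ((hasDerivAt_const_mul β).exp.mul
    ((hlin.sin.const_mul β).add (hlin.cos.const_mul γ))).congr_deriv ?_
  simp only [Pi.add_apply]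
  ring

lemma contDiff_expMulSin : ContDiff ℝ 2 (expMulSin β γ θ) := by
  unfold expMulSin
  fun_prop

lemma expMulSin_ode {d : ℝ} (hd : d ≠ 0) (a s : ℝ) :
    d * deriv (deriv (expMulSin (a / (2 * d)) γ θ)) s
        - a * deriv (expMulSin (a / (2 * d)) γ θ) s
      = -(a ^ 2 / (4 * d) + d * γ ^ 2) * expMulSin (a / (2 * d)) γ θ s := by
  rw [(hasDerivAt_deriv_expMulSin _ γ θ s).deriv, deriv_expMulSin, expMulSin]
  field_simp
  ring

end ExpMulSin

def sineProduct (d : ℝ) (a : E) (γ θ : Fin n → ℝ) (y : E) : ℝ :=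
  ∏ j, expMulSin (a j / (2 * d)) (γ j) (θ j) (y j)

section SineProduct

variable {d : ℝ} {a : EuclideanSpace ℝ (Fin n)} {γ θ : Fin n → ℝ}

lemma contDiff_sineProduct : ContDiff ℝ 2 (sineProduct d a γ θ) :=
  contDiff_prod_apply _ fun _ => contDiff_expMulSin _ _ _

lemma sineProduct_pos {y : E} (h : ∀ j, γ j * y j + θ j ∈ Set.Ioo 0 π) :
    0 < sineProduct d a γ θ y :=
  Finset.prod_pos fun j _ => mul_pos (exp_pos _) (sin_pos_of_pos_of_lt_pi (h j).1 (h j).2)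

lemma driftLap_sineProduct (hd : d ≠ 0) (x : E) :
    driftLap d a (sineProduct d a γ θ) x
      = -(‖a‖ ^ 2 / (4 * d) + d * ∑ j, γ j ^ 2) * sineProduct d a γ θ x := by
  set φ : Fin n → ℝ → ℝ := fun j => expMulSin (a j / (2 * d)) (γ j) (θ j)
  have hΦ : sineProduct d a γ θ = fun y => ∏ j, φ j (y j) := rfl
  have hφ (j : Fin n) : Differentiable ℝ (φ j) :=
    (contDiff_expMulSin _ _ _).differentiable two_ne_zero
  have hφ' (j : Fin n) : Differentiable ℝ (deriv (φ j)) :=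
    fun s => (hasDerivAt_deriv_expMulSin _ _ _ s).differentiableAt
  have hmode (k : Fin n) : d * pd2 (sineProduct d a γ θ) k k x - a k * pd (sineProduct d a γ θ) k x
      = -(a k ^ 2 / (4 * d) + d * γ k ^ 2) * sineProduct d a γ θ x := by
    rw [hΦ, pd2_prod_apply φ hφ hφ', pd_prod_apply φ hφ]
    beta_reduce
    rw [← Finset.mul_prod_erase _ (fun j => φ j (x j)) (Finset.mem_univ k)]
    linear_combination
      (∏ j ∈ Finset.univ.erase k, φ j (x j)) * expMulSin_ode (γ k) (θ k) hd (a k) (x k)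
  have hnorm : ‖a‖ ^ 2 = ∑ j, a j ^ 2 := by simp [EuclideanSpace.norm_sq_eq]
  calc driftLap d a (sineProduct d a γ θ) x
      = ∑ k, (d * pd2 (sineProduct d a γ θ) k k x - a k * pd (sineProduct d a γ θ) k x) := by
        rw [driftLap, lap, Finset.mul_sum, Finset.sum_sub_distrib]
    _ = ∑ k, -(a k ^ 2 / (4 * d) + d * γ k ^ 2) * sineProduct d a γ θ x :=
        Finset.sum_congr rfl fun k _ => hmode k
    _ = -(‖a‖ ^ 2 / (4 * d) + d * ∑ j, γ j ^ 2) * sineProduct d a γ θ x := by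
        rw [← Finset.sum_mul, hnorm, Finset.sum_div, Finset.mul_sum, ← Finset.sum_add_distrib,
          ← Finset.sum_neg_distrib]

end SineProduct

lemma nonneg_of_hasDerivAt_of_isMaxOn_Icc {q : ℝ → ℝ} {a b t D : ℝ} (hq : HasDerivAt q D t)
    (ht : t ∈ Set.Ioc a b) (hmax : IsMaxOn q (Set.Icc a b) t) : 0 ≤ D := by
  have hcone : a - t ∈ posTangentConeAt (Set.Icc a b) t :=
    sub_mem_posTangentConeAt_of_segment_subset
      ((convex_Icc a b).segment_subset ⟨ht.1.le, ht.2⟩ ⟨le_rfl, ht.1.le.trans ht.2⟩)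
  have h := hmax.localize.hasFDerivWithinAt_nonpos hq.hasFDerivAt.hasFDerivWithinAt hcone
  rw [ContinuousLinearMap.toSpanSingleton_apply, smul_eq_mul] at h
  nlinarith [ht.1]

lemma hasDerivAt_weightedGap {U : ℝ → ℝ} {U' t : ℝ} (hU : HasDerivAt U U' t) (κ μ P : ℝ) :
    HasDerivAt (fun s => exp (-(κ * s)) * (U s - exp (μ * s) * P))
      (exp (-(κ * t)) * (U' - μ * exp (μ * t) * P - κ * (U t - exp (μ * t) * P))) t := by
  have hκ := ((hasDerivAt_const_mul κ).neg (x := t)).exp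
  have hμ := ((hasDerivAt_const_mul μ).exp (x := t)).mul_const P
  refine (hκ.mul (hU.sub hμ)).congr_deriv ?_
  simp only [Pi.neg_apply, Pi.sub_apply]
  ring

namespace ImpSol

-- With `κ = r + 1`, where `r` bounds `f N / N`, the time derivative of the weighted gap is
-- negative wherever the gap is positive; see `weightedGap_nonpos_of_isMaxOn`.
def weightedGap {Ω : Set E} {d : ℝ} {a : E → E} {f g : ℝ → ℝ} (sol : ImpSol n Ω d a f g) (m : ℕ)
    (Ψ : E → ℝ) (μ κ : ℝ) (p : E × ℝ) : ℝ :=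
  exp (-(κ * p.2)) * (sol.u m p.1 p.2 - exp (μ * p.2) * Ψ p.1)

variable {Ω : Set (EuclideanSpace ℝ (Fin n))} {d : ℝ} {a : EuclideanSpace ℝ (Fin n)}
  {f g : ℝ → ℝ} (sol : ImpSol n Ω d (fun _ => a) f g) {r ν κ : ℝ}
  {Φ Ψ : EuclideanSpace ℝ (Fin n) → ℝ}

lemma deriv_u_le (hd : 0 ≤ d) (hf : ∀ N, 0 ≤ N → f N ≤ r * N) {m : ℕ}
    {x : E} {t : ℝ} (hx : x ∈ Ω) (ht : t ∈ Set.Ioc 0 1)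
    {Ψ : E → ℝ} (hΨ : ContDiffAt ℝ 2 Ψ x)
    (hmax : IsLocalMax ((fun y => sol.u m y t) - Ψ) x) :
    deriv (fun s => sol.u m x s) t ≤ driftLap d a Ψ x + r * sol.u m x t := by
  have hdrift := driftLap_le_of_isLocalMax_sub (a := a) hd (sol.u_space_C2 m t ht x hx) hΨ hmax
  have hfu := hf _ (sol.u_nonneg m x (subset_closure hx) t (Set.Ioc_subset_Icc_self ht))
  calc deriv (fun s => sol.u m x s) t
      = driftLap d a (fun y => sol.u m y t) x + f (sol.u m x t) := sol.pde m x hx t ht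
    _ ≤ driftLap d a Ψ x + r * sol.u m x t := add_le_add hdrift hfu

lemma weightedGap_nonpos_of_isMaxOn (hd : 0 ≤ d) (hΩ : IsOpen Ω)
    (hf : ∀ N, 0 ≤ N → f N ≤ r * N) (hΨ : ContDiff ℝ 2 Ψ)
    (hΨν : ∀ x ∈ Ω, driftLap d a Ψ x = ν * Ψ x) {m : ℕ} {x₀ : E} {t₀ : ℝ}
    (hx₀ : x₀ ∈ Ω) (ht₀ : t₀ ∈ Set.Ioc 0 1)
    (hmax : IsMaxOn (sol.weightedGap m Ψ (r + ν) (r + 1)) (closure Ω ×ˢ Set.Icc 0 1) (x₀, t₀)) :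
    sol.weightedGap m Ψ (r + ν) (r + 1) (x₀, t₀) ≤ 0 := by
  set c := exp ((r + ν) * t₀)
  have hspace : IsLocalMax ((fun y => sol.u m y t₀) - c • Ψ) x₀ := by
    filter_upwards [hΩ.mem_nhds hx₀] with y hy
    have h : sol.weightedGap m Ψ (r + ν) (r + 1) (y, t₀)
        ≤ sol.weightedGap m Ψ (r + ν) (r + 1) (x₀, t₀) :=
      hmax ⟨subset_closure hy, Set.Ioc_subset_Icc_self ht₀⟩
    exact le_of_mul_le_mul_left h (exp_pos _)
  have hut := sol.deriv_u_le hd hf hx₀ ht₀ (Ψ := c • Ψ) (hΨ.contDiffAt.const_smul c) hspace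
  rw [driftLap_const_smul, hΨν x₀ hx₀] at hut
  have hU := ((sol.u_time_C1 m x₀ hx₀ t₀ ht₀).differentiableAt one_ne_zero).hasDerivAt
  have htime := nonneg_of_hasDerivAt_of_isMaxOn_Icc
    (hasDerivAt_weightedGap hU (r + 1) (r + ν) (Ψ x₀)) ht₀
    (isMaxOn_iff.2 fun s hs => isMaxOn_iff.1 hmax (x₀, s) ⟨subset_closure hx₀, hs⟩)
  rw [mul_nonneg_iff_of_pos_left (exp_pos _)] at htime
  exact mul_nonpos_of_nonneg_of_nonpos (exp_pos _).le (by linarith)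

theorem u_le_exp_mul (hd : 0 ≤ d) (hΩ : IsOpen Ω) (hΩc : IsCompact (closure Ω))
    (hf : ∀ N, 0 ≤ N → f N ≤ r * N) (hΨ : ContDiff ℝ 2 Ψ) (hΨ0 : ∀ x ∈ closure Ω, 0 ≤ Ψ x)
    (hΨν : ∀ x ∈ Ω, driftLap d a Ψ x = ν * Ψ x) {m : ℕ} (hinit : ∀ x ∈ Ω, g (sol.N m x) ≤ Ψ x)
    {x : E} (hx : x ∈ closure Ω) {t : ℝ} (ht : t ∈ Set.Icc 0 1) :
    sol.u m x t ≤ exp ((r + ν) * t) * Ψ x := by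
  set V := sol.weightedGap m Ψ (r + ν) (r + 1)
  have hV (y : E) (s : ℝ) :
      0 < V (y, s) ↔ exp ((r + ν) * s) * Ψ y < sol.u m y s := by
    simp only [V, weightedGap]
    rw [mul_pos_iff_of_pos_left (exp_pos _), sub_pos]
  have hVcont : ContinuousOn V (closure Ω ×ˢ Set.Icc 0 1) := by
    have := hΨ.continuous
    exact (Continuous.continuousOn (by fun_prop)).mul
      ((sol.u_cont m).sub (Continuous.continuousOn (by fun_prop)))
  by_contra! hgt
  obtain ⟨⟨x₀, t₀⟩, ⟨hx₀, ht₀⟩, hmax⟩ :=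
    (hΩc.prod isCompact_Icc).exists_isMaxOn ⟨(x, t), hx, ht⟩ hVcont
  have hpos : 0 < V (x₀, t₀) := ((hV x t).2 hgt).trans_le (hmax ⟨hx, ht⟩)
  rcases ht₀.1.eq_or_lt with rfl | ht₀pos
  · have hclosed : IsClosed (closure Ω ∩ (fun y => V (y, 0)) ⁻¹' Set.Iic 0) :=
      (hVcont.comp (continuous_id.prodMk continuous_const).continuousOn
        fun y hy => ⟨hy, Set.left_mem_Icc.2 zero_le_one⟩).preimage_isClosed_of_isClosed
          isClosed_closure isClosed_Iic
    have hinit' : Ω ⊆ closure Ω ∩ (fun y => V (y, 0)) ⁻¹' Set.Iic 0 := fun y hy =>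
      ⟨subset_closure hy, not_lt.1 fun h => by
        have := (hV y 0).1 h
        rw [sol.init m y hy, mul_zero, exp_zero, one_mul] at this
        exact this.not_ge (hinit y hy)⟩
    exact hpos.not_ge (closure_minimal hinit' hclosed hx₀).2
  by_cases hx₀Ω : x₀ ∈ Ω
  · exact hpos.not_ge (sol.weightedGap_nonpos_of_isMaxOn hd hΩ hf hΨ hΨν hx₀Ω ⟨ht₀pos, ht₀.2⟩ hmax)
  · have hbdry := sol.bdry m x₀ (hΩ.frontier_eq ▸ ⟨hx₀, hx₀Ω⟩) t₀ ⟨ht₀pos, ht₀.2⟩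
    rw [hV, hbdry] at hpos
    exact hpos.not_ge (mul_nonneg (exp_pos _).le (hΨ0 x₀ hx₀))

lemma N_succ_le (hd : 0 ≤ d) (hΩ : IsOpen Ω) (hΩc : IsCompact (closure Ω))
    (hf : ∀ N, 0 ≤ N → f N ≤ r * N) (hg : ∀ N, 0 ≤ N → g N ≤ κ * N) (hκ : 0 ≤ κ)
    (hΦ : ContDiff ℝ 2 Φ) (hΦ0 : ∀ x ∈ closure Ω, 0 ≤ Φ x)
    (hΦν : ∀ x ∈ Ω, driftLap d a Φ x = ν * Φ x) {m : ℕ} {C : ℝ} (hC : 0 ≤ C)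
    (hN : ∀ x ∈ closure Ω, sol.N m x ≤ C * Φ x) {x : E}
    (hx : x ∈ closure Ω) :
    sol.N (m + 1) x ≤ κ * exp (r + ν) * C * Φ x := by
  have hinit (y) (hy : y ∈ Ω) : g (sol.N m y) ≤ ((κ * C) • Φ) y := calc
    g (sol.N m y) ≤ κ * sol.N m y := hg _ (sol.N_nonneg m y (subset_closure hy))
    _ ≤ κ * (C * Φ y) := mul_le_mul_of_nonneg_left (hN y (subset_closure hy)) hκ
    _ = ((κ * C) • Φ) y := by simp [mul_assoc]
  have hu := sol.u_le_exp_mul hd hΩ hΩc hf (Ψ := (κ * C) • Φ) (ν := ν) (hΦ.const_smul (κ * C))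
    (fun y hy => mul_nonneg (mul_nonneg hκ hC) (hΦ0 y hy))
    (fun y hy => by rw [driftLap_const_smul, hΦν y hy, Pi.smul_apply, smul_eq_mul]; ring)
    hinit hx ⟨zero_le_one, le_rfl⟩
  rw [sol.recur m x hx]
  rw [mul_one, Pi.smul_apply, smul_eq_mul] at hu
  linarith

lemma N_le_geometric (hd : 0 ≤ d) (hΩ : IsOpen Ω) (hΩc : IsCompact (closure Ω))
    (hf : ∀ N, 0 ≤ N → f N ≤ r * N) (hg : ∀ N, 0 ≤ N → g N ≤ κ * N) (hκ : 0 ≤ κ)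
    (hΦ : ContDiff ℝ 2 Φ) (hΦ0 : ∀ x ∈ closure Ω, 0 ≤ Φ x)
    (hΦν : ∀ x ∈ Ω, driftLap d a Φ x = ν * Φ x) {C : ℝ} (hC : 0 ≤ C)
    (hN₀ : ∀ x ∈ closure Ω, sol.N 0 x ≤ C * Φ x) (m : ℕ) :
    ∀ x ∈ closure Ω, sol.N m x ≤ C * (κ * exp (r + ν)) ^ m * Φ x := by
  induction m with
  | zero => simpa using hN₀
  | succ m ih =>
    intro x hx
    have h := sol.N_succ_le hd hΩ hΩc hf hg hκ hΦ hΦ0 hΦν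
      (mul_nonneg hC (pow_nonneg (mul_nonneg hκ (exp_pos _).le) m)) ih hx
    rw [pow_succ]
    linarith

theorem tendsto_N_zero (hd : 0 ≤ d) (hΩ : IsOpen Ω) (hΩc : IsCompact (closure Ω))
    (hf : ∀ N, 0 ≤ N → f N ≤ r * N) (hg : ∀ N, 0 ≤ N → g N ≤ κ * N) (hκ : 0 ≤ κ)
    (hΦ : ContDiff ℝ 2 Φ) (hΦpos : ∀ x ∈ closure Ω, 0 < Φ x)
    (hΦν : ∀ x ∈ Ω, driftLap d a Φ x = ν * Φ x) (hρ : κ * exp (r + ν) < 1)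
    {x : E} (hx : x ∈ closure Ω) :
    Tendsto (fun m => sol.N m x) atTop (𝓝 0) := by
  obtain ⟨C, hC⟩ := hΩc.exists_bound_of_continuousOn
    ((sol.N_cont 0).div hΦ.continuous.continuousOn fun y hy => (hΦpos y hy).ne')
  have hN₀ (y) (hy : y ∈ closure Ω) : sol.N 0 y ≤ max C 0 * Φ y := by
    rw [← div_le_iff₀ (hΦpos y hy)]
    exact (le_abs_self _).trans ((hC y hy).trans (le_max_left _ _))
  have hbound := sol.N_le_geometric hd hΩ hΩc hf hg hκ hΦ (fun y hy => (hΦpos y hy).le) hΦν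
    (le_max_right C 0) hN₀
  have hgeom : Tendsto (fun m => max C 0 * (κ * exp (r + ν)) ^ m * Φ x) atTop (𝓝 0) := by
    simpa using ((tendsto_pow_atTop_nhds_zero_of_lt_one
      (mul_nonneg hκ (exp_pos _).le) hρ).const_mul (max C 0)).mul_const (Φ x)
  exact squeeze_zero (fun m => sol.N_nonneg m x hx) (fun m => hbound m x hx) hgeom

end ImpSol

section Box

variable (l u : Fin n → ℝ)

lemma isOpen_box : IsOpen {x : E | ∀ i, x i ∈ Set.Ioo (l i) (u i)} := by
  rw [Set.ofPred_forall]
  exact isOpen_iInter_of_finite fun i => isOpen_Ioo.preimage (PiLp.continuous_apply 2 _ i)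

lemma isCompact_box : IsCompact {x : E | ∀ i, x i ∈ Set.Icc (l i) (u i)} := by
  convert (PiLp.homeomorph 2 fun _ : Fin n => ℝ).isCompact_preimage.2
    (isCompact_univ_pi fun i => isCompact_Icc (a := l i) (b := u i)) using 1
  ext x
  simp [PiLp.homeomorph, Pi.le_def, forall_and]

lemma closure_box_subset :
    closure {x : E | ∀ i, x i ∈ Set.Ioo (l i) (u i)} ⊆ {x | ∀ i, x i ∈ Set.Icc (l i) (u i)} :=
  closure_minimal (fun _ hx i => Set.Ioo_subset_Icc_self (hx i)) (isCompact_box l u).isClosed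

end Box

lemma exists_pos_lt_sum_one_div_add_sq {ι : Type*} [Fintype ι] {L : ι → ℝ} (hL : ∀ i, 0 < L i)
    {c : ℝ} (h : c < ∑ i, 1 / L i ^ 2) : ∃ ε > 0, c < ∑ i, 1 / (L i + ε) ^ 2 := by
  have hcont : ContinuousAt (fun ε => ∑ i, 1 / (L i + ε) ^ 2) 0 := by
    fun_prop (disch := simp [(hL _).ne'])
  have hev : ∀ᶠ ε in 𝓝 0, c < ∑ i, 1 / (L i + ε) ^ 2 :=
    hcont.eventually (lt_mem_nhds (by simpa using h))
  obtain ⟨ε, hεc, hε⟩ := ((hev.filter_mono nhdsWithin_le_nhds).and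
    (self_mem_nhdsWithin (s := Set.Ioi 0))).exists
  exact ⟨ε, hε, hεc⟩

lemma pi_div_mul_add_mem_Ioo {ℓ ε s : ℝ} (hε : 0 < ε) (hs : s ∈ Set.Icc 0 ℓ) :
    π / (ℓ + ε) * s + π / (ℓ + ε) * (ε / 2) ∈ Set.Ioo 0 π := by
  have hℓ : 0 < ℓ + ε := by linarith [hs.1.trans hs.2]
  rw [← mul_add, div_mul_eq_mul_div]
  constructor
  · have := hs.1
    positivity
  · rw [div_lt_iff₀ hℓ]
    nlinarith [pi_pos, hs.2]

theorem hyperrectangle_extinction_general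
    (n : ℕ) (d : ℝ) (hd : 0 < d)
    (a : EuclideanSpace ℝ (Fin n)) (L : Fin n → ℝ) (hL : ∀ i, 0 < L i)
    (Ω : Set (EuclideanSpace ℝ (Fin n)))
    (hΩ : Ω = {x | ∀ i, x i ∈ Set.Ioo 0 (L i)})
    (f g : ℝ → ℝ) (f'0 g'0 : ℝ) (hf : SatF f f'0) (hg : SatGext g g'0)
    (hsum : 1 / (d * Real.pi ^ 2) * (f'0 + Real.log g'0 - ‖a‖ ^ 2 / (4 * d))
      < ∑ i, 1 / L i ^ 2)
    (sol : ImpSol n Ω d (fun _ => a) f g) :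
    ∀ x ∈ Ω, Tendsto (fun m => sol.N m x) atTop (𝓝 0) := by
  obtain ⟨-, -, -, -, _, -, -, -, hf_le⟩ := hf
  obtain ⟨-, hg0, -, -, hg'0, hg_lt⟩ := hg
  have hg_le (N : ℝ) (hN : 0 ≤ N) : g N ≤ g'0 * N :=
    hN.eq_or_lt.elim (fun h => by simp [← h, hg0]) (hg_lt N)
  subst hΩ
  have hclosure := closure_box_subset (fun _ => 0) L
  have hΩc := (isCompact_box (fun _ => 0) L).of_isClosed_subset isClosed_closure hclosure
  obtain ⟨ε, hε, hεsum⟩ := exists_pos_lt_sum_one_div_add_sq hL hsum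
  set γ : Fin n → ℝ := fun j => π / (L j + ε)
  have hΦpos (x) (hx : x ∈ closure _) : 0 < sineProduct d a γ (fun j => γ j * (ε / 2)) x :=
    sineProduct_pos fun j => pi_div_mul_add_mem_Ioo hε (hclosure hx j)
  have hrate : g'0 * exp (f'0 + -(‖a‖ ^ 2 / (4 * d) + d * ∑ j, γ j ^ 2)) < 1 := by
    have hγ : d * ∑ j, γ j ^ 2 = d * π ^ 2 * ∑ j, 1 / (L j + ε) ^ 2 := by
      simp only [γ, div_pow, Finset.mul_sum]
      exact Finset.sum_congr rfl fun j _ => by ring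
    rw [one_div_mul_eq_div, div_lt_iff₀ (by positivity)] at hεsum
    rw [← exp_log hg'0, ← exp_add, exp_lt_one_iff]
    linarith
  intro x hx
  exact sol.tendsto_N_zero hd.le (isOpen_box _ _) hΩc (fun N hN => (hf_le N hN).2)
    hg_le hg'0.le contDiff_sineProduct hΦpos (fun x _ => driftLap_sineProduct hd.ne' x) hrate (subset_closure hx)

/-- Extinction on a hyperrectangle when the sum `∑ 1/Lᵢ²` lies above the critical
threshold. -/
theorem hyperrectangle_extinction
    (n : ℕ) (hn : 1 ≤ n) (d : ℝ) (hd : 0 < d)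
    (a : EuclideanSpace ℝ (Fin n)) (L : Fin n → ℝ) (hL : ∀ i, 0 < L i)
    (Ω : Set (EuclideanSpace ℝ (Fin n)))
    (hΩ : Ω = {x | ∀ i, x i ∈ Set.Ioo 0 (L i)})
    (f g : ℝ → ℝ) (f'0 g'0 : ℝ) (hf : SatF f f'0) (hg : SatGext g g'0)
    (hsum : 1 / (d * Real.pi ^ 2) * (f'0 + Real.log g'0 - ‖a‖ ^ 2 / (4 * d))
      < ∑ i, 1 / L i ^ 2)
    (sol : ImpSol n Ω d (fun _ => a) f g) :
    ∀ x ∈ Ω, Tendsto (fun m => sol.N m x) atTop (𝓝 0) :=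
  hyperrectangle_extinction_general n d hd a L hL Ω hΩ f g f'0 g'0 hf hg hsum sol
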